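/- arXiv:2604.22804 — 5 statements merged into one kernel-verified Lean document; each statement's English description precedes it below -/
import Mathlib

section
/- Fix E > 0 and γ > 0, and set ρ_k := √(γ·ln k). Then for all sufficiently large k one has 2ρ_k ≤ √(k·E), and there exist vectors α_1, …, α_M ∈ ℂ^k with ‖α_m‖² ≤ k·E for every m, pairwise distances ‖α_m − α_{m'}‖ ≥ 2√(γ·ln k) for m ≠ m', and M ≥ (k·E/(4γ·ln k))^k; in particular ln M ≥ k·ln k − k·ln(ln k) + k·ln(E/(4γ)). -/
open MeasureTheory Metric Filter Module ENNReal

/-- Volume packing lemma: in a nontrivial finite-dimensional real normed space,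
there is a `d`-separated finite subset of the closed ball of radius `R` of
cardinality at least `(R/d)^dim`. -/
lemma packing_lemma_aux (V : Type*) [NormedAddCommGroup V] [NormedSpace ℝ V]
    [FiniteDimensional ℝ V] (hn : 0 < finrank ℝ V)
    (R d : ℝ) (hR : 0 ≤ R) (hd : 0 < d) :
    ∃ S : Finset V, (↑S ⊆ closedBall (0 : V) R) ∧
      (∀ x ∈ S, ∀ y ∈ S, x ≠ y → d ≤ dist x y) ∧
      (R / d) ^ (finrank ℝ V) ≤ (S.card : ℝ) := by
  classical
  haveI : Nontrivial V := nontrivial_of_finrank_pos hn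
  borelize V
  obtain ⟨t, htf, hcov⟩ := (Metric.totallyBounded_iff).mp
    ((isCompact_closedBall (0 : V) R).totallyBounded) (d / 3) (by positivity)
  -- every d-separated subset of the ball has card ≤ htf.toFinset.card
  have hbound : ∀ S : Finset V, (↑S ⊆ closedBall (0 : V) R) →
      (∀ x ∈ S, ∀ y ∈ S, x ≠ y → d ≤ dist x y) → S.card ≤ htf.toFinset.card := by
    intro S hsub hsep
    have hf : ∀ x : V, ∃ y, x ∈ S → y ∈ t ∧ x ∈ ball y (d / 3) := by
      intro x
      by_cases hx : x ∈ S
      · have hx2 := hcov (hsub hx)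
        simp only [Set.mem_iUnion, exists_prop] at hx2
        obtain ⟨y, hy1, hy2⟩ := hx2
        exact ⟨y, fun _ => ⟨hy1, hy2⟩⟩
      · exact ⟨0, fun h => absurd h hx⟩
    choose f hfspec using hf
    apply Finset.card_le_card_of_injOn f
    · intro a ha
      exact htf.mem_toFinset.mpr (hfspec a ha).1
    · intro a ha b hb hab
      by_contra hne
      have h1 := (hfspec a (by simpa using ha)).2
      have h2 := (hfspec b (by simpa using hb)).2
      rw [hab] at h1
      have hdd : dist a b < d := by
        have := dist_triangle a (f b) b
        rw [mem_ball] at h1 h2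
        have h2' : dist (f b) b < d / 3 := by rw [dist_comm]; exact h2
        linarith
      exact absurd (hsep a (by simpa using ha) b (by simpa using hb) hne) (not_le.mpr hdd)
  -- take a separated set of maximal cardinality
  set A : Set ℕ := {m | ∃ S : Finset V, ((↑S ⊆ closedBall (0 : V) R) ∧
      (∀ x ∈ S, ∀ y ∈ S, x ≠ y → d ≤ dist x y)) ∧ S.card = m} with hA
  have hA0 : (0 : ℕ) ∈ A := ⟨∅, ⟨by simp, by simp⟩, rfl⟩
  have hAb : BddAbove A := by
    refine ⟨htf.toFinset.card, ?_⟩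
    rintro m ⟨S, ⟨h1, h2⟩, rfl⟩
    exact hbound S h1 h2
  obtain ⟨S, ⟨hSsub, hSsep⟩, hScard⟩ := Nat.sSup_mem ⟨0, hA0⟩ hAb
  refine ⟨S, hSsub, hSsep, ?_⟩
  -- maximality gives a covering by balls of radius d
  have hcover : closedBall (0 : V) R ⊆ ⋃ s ∈ S, ball s d := by
    intro x hx
    by_contra hxm
    simp only [Set.mem_iUnion, mem_ball, exists_prop, not_exists, not_and, not_lt] at hxm
    have hxS : x ∉ S := by
      intro h
      have := hxm x h
      simp only [dist_self] at this
      linarith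
    have hmem : (insert x S).card ∈ A := by
      refine ⟨insert x S, ⟨?_, ?_⟩, rfl⟩
      · intro a ha
        simp only [Finset.coe_insert, Set.mem_insert_iff] at ha
        rcases ha with rfl | ha
        · exact hx
        · exact hSsub ha
      · intro a ha b hb hab
        rcases Finset.mem_insert.mp ha with rfl | ha' <;>
          rcases Finset.mem_insert.mp hb with rfl | hb'
        · exact absurd rfl hab
        · exact hxm b hb'
        · rw [dist_comm]; exact hxm a ha'
        · exact hSsep a ha' b hb' hab
    have hle := le_csSup hAb hmem
    rw [Finset.card_insert_of_notMem hxS, hScard] at hle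
    omega
  -- volume argument
  set μ : Measure V := (finBasis ℝ V).addHaar with hμ
  have hμ1 : μ (closedBall (0 : V) R) ≤ ∑ s ∈ S, μ (ball s d) :=
    le_trans (measure_mono hcover) (MeasureTheory.measure_biUnion_finset_le _ _)
  have hμ2 : ∑ s ∈ S, μ (ball s d) = (S.card : ℝ≥0∞) * μ (ball (0 : V) d) := by
    rw [Finset.sum_congr rfl fun s _ => Measure.addHaar_ball_center μ s d,
      Finset.sum_const, nsmul_eq_mul]
  rw [hμ2, Measure.addHaar_closedBall μ 0 hR, Measure.addHaar_ball μ 0 hd.le] at hμ1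
  have hu0 : μ (ball (0 : V) 1) ≠ 0 := (measure_ball_pos μ 0 one_pos).ne'
  have hut : μ (ball (0 : V) 1) ≠ ⊤ := measure_ball_lt_top.ne
  have key : ENNReal.ofReal (R ^ finrank ℝ V) ≤
      (S.card : ℝ≥0∞) * ENNReal.ofReal (d ^ finrank ℝ V) := by
    rw [← ENNReal.mul_le_mul_iff_left hu0 hut]
    calc ENNReal.ofReal (R ^ finrank ℝ V) * μ (ball 0 1)
        ≤ (S.card : ℝ≥0∞) * (ENNReal.ofReal (d ^ finrank ℝ V) * μ (ball 0 1)) := hμ1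
      _ = (S.card : ℝ≥0∞) * ENNReal.ofReal (d ^ finrank ℝ V) * μ (ball 0 1) := by ring
  rw [← ENNReal.ofReal_natCast, ← ENNReal.ofReal_mul (by positivity)] at key
  have hreal : R ^ finrank ℝ V ≤ (S.card : ℝ) * d ^ finrank ℝ V :=
    (ENNReal.ofReal_le_ofReal_iff (by positivity)).mp key
  rw [div_pow, div_le_iff₀ (by positivity)]
  exact hreal

/-- Near-`k log k` achievability: with separation radius `ρ_k = √(γ ln k)`, for all
sufficiently large `k` one has `2ρ_k ≤ √(kE)` and there exist at least
`(kE/(4γ ln k))^k` energy-constrained signatures in `ℂ^k` with pairwise distances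
`≥ 2√(γ ln k)`; in particular `ln M ≥ k ln k − k ln ln k + k ln(E/(4γ))`. -/
theorem near_klogk_achievability (E γ : ℝ) (hE : 0 < E) (hγ : 0 < γ) :
    ∃ k₀ : ℕ, ∀ k : ℕ, k₀ ≤ k →
      2 * Real.sqrt (γ * Real.log k) ≤ Real.sqrt (k * E) ∧
      ∃ (M : ℕ) (α : Fin M → EuclideanSpace ℂ (Fin k)),
        (∀ m, ‖α m‖ ^ 2 ≤ k * E) ∧
        (∀ m m', m ≠ m' → 2 * Real.sqrt (γ * Real.log k) ≤ ‖α m - α m'‖) ∧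
        ((k * E / (4 * γ * Real.log k)) ^ k ≤ (M : ℝ)) ∧
        ((k : ℝ) * Real.log k - k * Real.log (Real.log k) + k * Real.log (E / (4 * γ))
          ≤ Real.log M) := by
  classical
  have h1 : ∀ᶠ k : ℕ in atTop, 1 ≤ Real.log k :=
    (Real.tendsto_log_atTop.comp tendsto_natCast_atTop_atTop).eventually_ge_atTop 1
  have h2 : ∀ᶠ k : ℕ in atTop, 4 * γ * Real.log k ≤ (k : ℝ) * E := by
    have hc : (0 : ℝ) < E / (4 * γ) := by positivity
    have h3 := (Asymptotics.isLittleO_iff.mp Real.isLittleO_log_id_atTop) hc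
    have h4 := tendsto_natCast_atTop_atTop (R := ℝ) |>.eventually h3
    filter_upwards [h4, eventually_ge_atTop 1] with k hk hk1
    have hk0 : (0 : ℝ) ≤ (k : ℝ) := Nat.cast_nonneg k
    rw [Real.norm_eq_abs, Real.norm_eq_abs, id_eq, abs_of_nonneg hk0] at hk
    have hlog : Real.log k ≤ E / (4 * γ) * k := le_trans (le_abs_self _) hk
    have := mul_le_mul_of_nonneg_left hlog (by positivity : (0:ℝ) ≤ 4 * γ)
    have heq : 4 * γ * (E / (4 * γ) * k) = (k : ℝ) * E := by
      field_simp
    linarith [heq ▸ this]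
  obtain ⟨k₀, hk₀⟩ := eventually_atTop.mp (h1.and h2)
  refine ⟨k₀, fun k hk => ?_⟩
  obtain ⟨hL1, hkE⟩ := hk₀ k hk
  set L := Real.log k with hLdef
  have hk1 : (1 : ℝ) < (k : ℝ) := by
    by_contra h
    push_neg at h
    have := Real.log_nonpos (Nat.cast_nonneg k) h
    linarith
  have hkpos : (0 : ℝ) < k := lt_trans one_pos hk1
  have hknat : 0 < k := by exact_mod_cast hkpos
  have hLpos : (0 : ℝ) < L := lt_of_lt_of_le one_pos hL1
  have hγL : (0 : ℝ) < γ * L := by positivity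
  have hkEpos : (0 : ℝ) < (k : ℝ) * E := by positivity
  -- 2√(γL) = √(4(γL))
  have hsqrt4 : Real.sqrt 4 = 2 := by
    rw [show (4 : ℝ) = 2 ^ 2 by norm_num, Real.sqrt_sq (by norm_num : (0:ℝ) ≤ 2)]
  have hd_eq : 2 * Real.sqrt (γ * L) = Real.sqrt (4 * (γ * L)) := by
    rw [Real.sqrt_mul (by norm_num : (0:ℝ) ≤ 4), hsqrt4]
  have hfirst : 2 * Real.sqrt (γ * L) ≤ Real.sqrt ((k : ℝ) * E) := by
    rw [hd_eq]
    exact Real.sqrt_le_sqrt (by linarith [hkE])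
  refine ⟨hfirst, ?_⟩
  -- apply the packing lemma in ℂ^k
  set V := EuclideanSpace ℂ (Fin k) with hV
  have hfr : finrank ℝ V = 2 * k := by
    rw [← finrank_mul_finrank ℝ ℂ V, Complex.finrank_real_complex, finrank_euclideanSpace,
      Fintype.card_fin]
  set R := Real.sqrt ((k : ℝ) * E) with hRdef
  set d := 2 * Real.sqrt (γ * L) with hddef
  have hdpos : 0 < d := by
    rw [hddef]
    positivity
  obtain ⟨S, hSsub, hSsep, hScard⟩ := packing_lemma_aux V (hfr ▸ by omega)
    R d (Real.sqrt_nonneg _) hdpos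
  refine ⟨S.card, fun m => ((S.equivFin.symm m : S) : V), ?_, ?_, ?_, ?_⟩
  · -- energy constraint
    intro m
    have hmem := hSsub (S.equivFin.symm m).2
    rw [mem_closedBall, dist_zero_right] at hmem
    calc ‖((S.equivFin.symm m : S) : V)‖ ^ 2 ≤ R ^ 2 :=
          pow_le_pow_left₀ (norm_nonneg _) hmem 2
      _ = (k : ℝ) * E := Real.sq_sqrt hkEpos.le
  · -- separation
    intro m m' hmm
    have hne : ((S.equivFin.symm m : S) : V) ≠ ((S.equivFin.symm m' : S) : V) := by
      intro h
      exact hmm (S.equivFin.symm.injective (Subtype.ext h) ▸ rfl)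
    have := hSsep _ (S.equivFin.symm m).2 _ (S.equivFin.symm m').2 hne
    rwa [dist_eq_norm] at this
  · -- counting bound
    have hRd : (R / d) ^ (finrank ℝ V) = ((k : ℝ) * E / (4 * γ * L)) ^ k := by
      rw [hfr, pow_mul, div_pow]
      congr 1
      rw [hRdef, hddef, Real.sq_sqrt hkEpos.le, mul_pow, Real.sq_sqrt hγL.le]
      ring_nf
    rw [← hRd]
    exact hScard
  · -- logarithmic bound
    have hcount : ((k : ℝ) * E / (4 * γ * L)) ^ k ≤ (S.card : ℝ) := by
      have hRd : (R / d) ^ (finrank ℝ V) = ((k : ℝ) * E / (4 * γ * L)) ^ k := by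
        rw [hfr, pow_mul, div_pow]
        congr 1
        rw [hRdef, hddef, Real.sq_sqrt hkEpos.le, mul_pow, Real.sq_sqrt hγL.le]
        ring_nf
      rw [← hRd]
      exact hScard
    have hxpos : (0 : ℝ) < (k : ℝ) * E / (4 * γ * L) := by positivity
    have hlogx : Real.log ((k : ℝ) * E / (4 * γ * L)) =
        Real.log k - Real.log L + Real.log (E / (4 * γ)) := by
      rw [Real.log_div (by positivity) (by positivity),
        Real.log_mul (by positivity) hE.ne',
        Real.log_mul (by positivity) hLpos.ne',
        Real.log_div hE.ne' (by positivity)]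
      ring
    calc (k : ℝ) * Real.log k - k * Real.log L + k * Real.log (E / (4 * γ))
        = (k : ℝ) * Real.log ((k : ℝ) * E / (4 * γ * L)) := by rw [hlogx]; ring
      _ = Real.log (((k : ℝ) * E / (4 * γ * L)) ^ k) := by rw [Real.log_pow]
      _ ≤ Real.log (S.card : ℝ) := Real.log_le_log (pow_pos hxpos k) hcount
end

section
/- Fix E > 0, γ > 0, N ≥ 0 and c > 0, and let (M_k) be a sequence of positive reals such that for all sufficiently large k: (k·E/(4γ·ln k))^k ≤ M_k ≤ (1 + 4√(k·E)/√((2N+1)·c·ln k))^{2k}. Then there exist a constant C > 0 and an index k₀ such that for all k ≥ k₀: |ln M_k − (k·ln k − k·ln(ln k))| ≤ C·k. -/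
/-- Order-optimal scaling law: if for all sufficiently large `k` the number of users
`M_k` obeys the achievability lower bound and converse upper bound, then
`ln M_k = k ln k − k ln ln k + O(k)`. -/
theorem scaling_law (E γ N c : ℝ) (hE : 0 < E) (hγ : 0 < γ) (hN : 0 ≤ N) (hc : 0 < c)
    (M : ℕ → ℝ) (hMpos : ∀ k, 0 < M k)
    (hbound : ∃ k₁ : ℕ, ∀ k : ℕ, k₁ ≤ k →
      ((k : ℝ) * E / (4 * γ * Real.log k)) ^ k ≤ M k ∧
      M k ≤ (1 + 4 * Real.sqrt (k * E) /
        Real.sqrt ((2 * N + 1) * c * Real.log k)) ^ (2 * k)) :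
    ∃ (C : ℝ) (k₀ : ℕ), 0 < C ∧ ∀ k : ℕ, k₀ ≤ k →
      |Real.log (M k) - ((k : ℝ) * Real.log k - k * Real.log (Real.log k))| ≤ C * k := by
  obtain ⟨k₁, hk₁⟩ := hbound
  have hNc : (0 : ℝ) < (2 * N + 1) * c := by positivity
  have hsNc : (0 : ℝ) < Real.sqrt ((2 * N + 1) * c) := Real.sqrt_pos.mpr hNc
  obtain ⟨A, hApos, hA⟩ : ∃ A : ℝ, 0 < A ∧ A = 4 * Real.sqrt E / Real.sqrt ((2 * N + 1) * c) :=
    ⟨_, div_pos (by positivity) hsNc, rfl⟩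
  refine ⟨2 * Real.log (1 + A) + |Real.log (E / (4 * γ))| + 1, max k₁ 3, by
    have : 0 ≤ Real.log (1 + A) := Real.log_nonneg (by linarith)
    positivity, ?_⟩
  intro k hk
  have hk3 : (3 : ℕ) ≤ k := le_trans (le_max_right _ _) hk
  have hk1 : k₁ ≤ k := le_trans (le_max_left _ _) hk
  obtain ⟨hlow, hup⟩ := hk₁ k hk1
  have hkR : (3 : ℝ) ≤ (k : ℝ) := by exact_mod_cast hk3
  have hkpos : (0 : ℝ) < k := by linarith
  have hlogk : 1 < Real.log k := by
    have : Real.log (Real.exp 1) < Real.log k := by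
      apply Real.log_lt_log (Real.exp_pos 1)
      calc Real.exp 1 < 3 := by
            have := Real.exp_one_lt_d9; linarith
        _ ≤ (k : ℝ) := hkR
    simpa using this
  have hlogkpos : 0 < Real.log k := by linarith
  -- lower bound
  have hbasepos : 0 < (k : ℝ) * E / (4 * γ * Real.log k) := by positivity
  have hlog_low : (k : ℝ) * Real.log ((k : ℝ) * E / (4 * γ * Real.log k)) ≤ Real.log (M k) := by
    have := Real.log_le_log (by positivity) hlow
    rwa [Real.log_pow] at this
  have hbase_eq : Real.log ((k : ℝ) * E / (4 * γ * Real.log k))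
      = Real.log k - Real.log (Real.log k) + Real.log (E / (4 * γ)) := by
    rw [Real.log_div (by positivity) (by positivity), Real.log_mul (by positivity) (ne_of_gt hE),
      Real.log_mul (by positivity) (ne_of_gt hlogkpos),
      Real.log_div (ne_of_gt hE) (by positivity)]
    ring
  have hL : (k : ℝ) * Real.log k - k * Real.log (Real.log k) + k * Real.log (E / (4 * γ))
      ≤ Real.log (M k) := by
    have := hlog_low
    rw [hbase_eq] at this
    nlinarith [this]
  -- upper bound
  have hkE : Real.sqrt ((k : ℝ) * E) = Real.sqrt k * Real.sqrt E :=
    Real.sqrt_mul (le_of_lt hkpos) E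
  have hNcl : Real.sqrt ((2 * N + 1) * c * Real.log k)
      = Real.sqrt ((2 * N + 1) * c) * Real.sqrt (Real.log k) :=
    Real.sqrt_mul (le_of_lt hNc) _
  have hslog : 0 < Real.sqrt (Real.log k) := Real.sqrt_pos.mpr hlogkpos
  obtain ⟨s, hspos, hs⟩ : ∃ s : ℝ, 0 < s ∧ s = Real.sqrt k / Real.sqrt (Real.log k) :=
    ⟨_, div_pos (Real.sqrt_pos.mpr hkpos) hslog, rfl⟩
  have hratio : 4 * Real.sqrt ((k : ℝ) * E) / Real.sqrt ((2 * N + 1) * c * Real.log k)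
      = A * s := by
    rw [hkE, hNcl, hA, hs]
    field_simp
  have hs1 : 1 ≤ s := by
    rw [hs, le_div_iff₀ hslog, one_mul]
    apply Real.sqrt_le_sqrt
    calc Real.log k ≤ (k : ℝ) - 1 := by
          have := Real.log_le_sub_one_of_pos hkpos; linarith
      _ ≤ (k : ℝ) := by linarith
  have hAs : 1 + A * s ≤ (1 + A) * s := by nlinarith
  have hup' : Real.log (M k) ≤ (2 * k : ℝ) * Real.log (1 + A * s) := by
    have h := Real.log_le_log (hMpos k) hup
    rw [Real.log_pow, hratio] at h
    push_cast at h ⊢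
    linarith
  have hlog_s : Real.log s = Real.log k / 2 - Real.log (Real.log k) / 2 := by
    rw [hs, Real.log_div (ne_of_gt (Real.sqrt_pos.mpr hkpos)) (ne_of_gt hslog),
      Real.log_sqrt (le_of_lt hkpos), Real.log_sqrt (le_of_lt hlogkpos)]
  have hlogAs : Real.log (1 + A * s) ≤ Real.log (1 + A) + Real.log s := by
    have hAs0 : (0:ℝ) < 1 + A * s := by nlinarith [mul_pos hApos hspos]
    have hA0 : (0:ℝ) < 1 + A := by linarith
    calc Real.log (1 + A * s) ≤ Real.log ((1 + A) * s) :=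
          Real.log_le_log hAs0 hAs
      _ = Real.log (1 + A) + Real.log s :=
          Real.log_mul (ne_of_gt hA0) (ne_of_gt hspos)
  have hU : Real.log (M k) ≤ (k : ℝ) * Real.log k - k * Real.log (Real.log k)
      + 2 * Real.log (1 + A) * k := by
    have h2 : (2 * k : ℝ) * Real.log (1 + A * s) ≤ (2 * k : ℝ) * (Real.log (1 + A) + Real.log s) :=
      mul_le_mul_of_nonneg_left hlogAs (by positivity)
    rw [hlog_s] at h2
    have h3 : (2 * (k:ℝ)) * (Real.log (1 + A) + (Real.log k / 2 - Real.log (Real.log k) / 2))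
        = (k : ℝ) * Real.log k - k * Real.log (Real.log k) + 2 * Real.log (1 + A) * k := by ring
    linarith [hup', h2, h3.le, h3.ge]
  have h1 : (0:ℝ) ≤ Real.log (1 + A) := Real.log_nonneg (by linarith)
  have habs : -|Real.log (E / (4 * γ))| ≤ Real.log (E / (4 * γ)) := neg_abs_le _
  have hm1 : (k:ℝ) * (-|Real.log (E / (4 * γ))|) ≤ (k:ℝ) * Real.log (E / (4 * γ)) :=
    mul_le_mul_of_nonneg_left habs (le_of_lt hkpos)
  have hm2 : (0:ℝ) ≤ (2 * Real.log (1 + A) + 1) * k := by positivity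
  have hm3 : (0:ℝ) ≤ (|Real.log (E / (4 * γ))| + 1) * k := by positivity
  rw [abs_le]
  constructor
  · linarith [hL]
  · linarith [hU]
end

section
/- Let N > 0 and δ > 0, and let p_N be the probability distribution on ℕ given by p_N(n) = (1/(N+1))·(N/(N+1))^n. Then for every k ≥ 1, the sum over all tuples n^k = (n_1, …, n_k) ∈ ℕ^k with n_1 + ⋯ + n_k ≥ k·(N+δ) of the product p_N(n_1)⋯p_N(n_k) is at most exp(−k·Λ(δ,N)), where Λ(δ,N) = (N+δ)·ln((N+δ)/N) − (N+δ+1)·ln((N+δ+1)/(N+1)). -/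
/-!
Exponential tilting (Chernoff's method). For every `t ≥ 0` the indicator of `k m ≤ ∑ nᵢ` is at most
`exp (t (∑ nᵢ - k m))`, so the tail is bounded by `exp (-t k m)` times the `k`-th power of the
moment generating function `∑ₙ p_N(n) eᵗⁿ = 1 / (N + 1 - N eᵗ)` of a single sample. The optimal tilt
`eᵗ = m (N + 1) / (N (m + 1))`, with `m = N + δ`, turns the tilted sample into a thermal one of mean
`m`, and the resulting exponent is exactly `k Λ(δ, N)`.
-/

open Real Finset

theorem tsum_ite_ge_le_exp_mul_tsum {β : Type*} {f X : β → ℝ} (hf : ∀ b, 0 ≤ f b) {t : ℝ}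
    (ht : 0 ≤ t) (a : ℝ) (hs : Summable fun b => f b * exp (t * X b)) :
    ∑' b, (if a ≤ X b then f b else 0) ≤ exp (-(t * a)) * ∑' b, f b * exp (t * X b) := by
  have hterm : ∀ b, (if a ≤ X b then f b else 0) ≤ exp (-(t * a)) * (f b * exp (t * X b)) := by
    intro b
    split_ifs with hab
    · have hexp : 1 ≤ exp (t * (X b - a)) := one_le_exp (mul_nonneg ht (sub_nonneg.2 hab))
      calc f b ≤ f b * exp (t * (X b - a)) := le_mul_of_one_le_right (hf b) hexp
        _ = exp (-(t * a)) * (f b * exp (t * X b)) := by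
          rw [mul_left_comm, ← exp_add, neg_add_eq_sub, ← mul_sub]
    · exact mul_nonneg (exp_pos _).le (mul_nonneg (hf b) (exp_pos _).le)
  have hs' := hs.mul_left (exp (-(t * a)))
  have hnonneg : ∀ b, 0 ≤ if a ≤ X b then f b else 0 := fun b => by
    split_ifs
    exacts [hf b, le_rfl]
  rw [← tsum_mul_left]
  exact (hs'.of_nonneg_of_le hnonneg hterm).tsum_le_tsum hterm hs'

theorem hasSum_prod_pi_fin {α : Type*} {g : α → ℝ} (hg0 : ∀ a, 0 ≤ g a) (hg : Summable g)
    (k : ℕ) : HasSum (fun n : Fin k → α => ∏ i, g (n i)) ((∑' a, g a) ^ k) := by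
  induction k with
  | zero => simp
  | succ k ih =>
    have hpair : HasSum (fun p : α × (Fin k → α) => g p.1 * ∏ i, g (p.2 i))
        ((∑' a, g a) ^ (k + 1)) := by
      have hs : Summable fun p : α × (Fin k → α) => g p.1 * ∏ i, g (p.2 i) :=
        hg.mul_of_nonneg (g := fun n : Fin k → α => ∏ i, g (n i)) ih.summable hg0
          fun n => prod_nonneg fun i _ => hg0 _
      rw [pow_succ']
      exact HasSum.mul (f := g) (g := fun n : Fin k → α => ∏ i, g (n i)) hg.hasSum ih hs
    rw [← (Fin.consEquiv fun _ => α).hasSum_iff]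
    simpa [Function.comp_def, Fin.consEquiv, Fin.prod_univ_succ] using hpair

theorem hasSum_thermal_mul_exp {N t : ℝ} (hN : 0 ≤ N) (ht : N * exp t < N + 1) :
    HasSum (fun n : ℕ => 1 / (N + 1) * (N / (N + 1)) ^ n * exp (t * n))
      (1 / (N + 1 - N * exp t)) := by
  have hN1 : 0 < N + 1 := by linarith
  have hr1 : N * exp t / (N + 1) < 1 := (div_lt_one hN1).2 ht
  have hterm : ∀ n : ℕ,
      1 / (N + 1) * (N * exp t / (N + 1)) ^ n = 1 / (N + 1) * (N / (N + 1)) ^ n * exp (t * n) := by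
    intro n
    rw [mul_comm t, exp_nat_mul]
    ring
  have hsum : 1 / (N + 1) * (1 - N * exp t / (N + 1))⁻¹ = 1 / (N + 1 - N * exp t) := by
    have : N + 1 - N * exp t ≠ 0 := by linarith
    field_simp
  simpa only [hterm, hsum] using
    (hasSum_geometric_of_lt_one (by positivity) hr1).mul_left (1 / (N + 1))

theorem hasSum_prod_mul_exp_sum {p : ℕ → ℝ} (hp : ∀ n, 0 ≤ p n) {t M : ℝ}
    (hM : HasSum (fun n : ℕ => p n * exp (t * n)) M) (k : ℕ) :
    HasSum (fun n : Fin k → ℕ => (∏ i, p (n i)) * exp (t * ∑ i, (n i : ℝ))) (M ^ k) := by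
  have hprod := hasSum_prod_pi_fin (fun n => mul_nonneg (hp n) (exp_pos _).le) hM.summable k
  simpa only [hM.tsum_eq, prod_mul_distrib, mul_sum, exp_sum] using hprod

theorem hasSum_thermal_mul_exp_tilt {N m : ℝ} (hN : 0 < N) (hm : 0 < m) :
    HasSum (fun n : ℕ => 1 / (N + 1) * (N / (N + 1)) ^ n *
      exp (log (m * (N + 1) / (N * (m + 1))) * n)) ((m + 1) / (N + 1)) := by
  have htilt : N * exp (log (m * (N + 1) / (N * (m + 1)))) = m * (N + 1) / (m + 1) := by
    rw [exp_log (by positivity)]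
    field_simp
  have hgap : N + 1 - m * (N + 1) / (m + 1) = (N + 1) / (m + 1) := by
    field_simp
    ring
  convert hasSum_thermal_mul_exp hN.le (by rw [htilt, div_lt_iff₀ (by positivity)]; nlinarith)
    using 1
  rw [htilt, hgap, one_div_div]

theorem thermal_upper_tail_general (N δ : ℝ) (hN : 0 < N) (hδ : 0 < δ) (k : ℕ) :
    (∑' n : Fin k → ℕ,
      if (k : ℝ) * (N + δ) ≤ ∑ i, (n i : ℝ)
      then ∏ i, (1 / (N + 1)) * (N / (N + 1)) ^ (n i)
      else 0)
    ≤ Real.exp (-(k : ℝ) *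
        ((N + δ) * Real.log ((N + δ) / N) -
          (N + δ + 1) * Real.log ((N + δ + 1) / (N + 1)))) := by
  have hm : 0 < N + δ := by positivity
  have ht : 0 ≤ log ((N + δ) * (N + 1) / (N * (N + δ + 1))) :=
    log_nonneg <| by rw [le_div_iff₀ (by positivity)]; nlinarith
  have hmgf := hasSum_prod_mul_exp_sum (fun n => by positivity)
    (hasSum_thermal_mul_exp_tilt hN hm) k
  have htΛ : log ((N + δ) * (N + 1) / (N * (N + δ + 1))) =
      log ((N + δ) / N) - log ((N + δ + 1) / (N + 1)) := by
    rw [← log_div (by positivity) (by positivity)]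
    congr 1
    field_simp
  calc _ ≤ exp (-(log ((N + δ) * (N + 1) / (N * (N + δ + 1))) * (k * (N + δ)))) *
        ((N + δ + 1) / (N + 1)) ^ k :=
        hmgf.tsum_eq ▸ tsum_ite_ge_le_exp_mul_tsum (fun n => by positivity) ht _ hmgf.summable
    _ = _ := by
      have hpow : ((N + δ + 1) / (N + 1)) ^ k = exp (k * log ((N + δ + 1) / (N + 1))) := by
        rw [exp_nat_mul, exp_log (by positivity)]
      rw [hpow, ← exp_add, htΛ]
      congr 1
      ring

/-- Upper tail bound (correct detection case of Lemma 2): for the geometric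
photon-number distribution `p_N(n) = (1/(N+1))·(N/(N+1))^n` of a thermal state with
mean `N`, the probability that `k` i.i.d. samples sum to at least `k(N+δ)` is at
most `exp(−k·Λ(δ,N))`. -/
theorem thermal_upper_tail (N δ : ℝ) (hN : 0 < N) (hδ : 0 < δ) (k : ℕ) (hk : 1 ≤ k) :
    (∑' n : Fin k → ℕ,
      if (k : ℝ) * (N + δ) ≤ ∑ i, (n i : ℝ)
      then ∏ i, (1 / (N + 1)) * (N / (N + 1)) ^ (n i)
      else 0)
    ≤ Real.exp (-(k : ℝ) *
        ((N + δ) * Real.log ((N + δ) / N) -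
          (N + δ + 1) * Real.log ((N + δ + 1) / (N + 1)))) :=
  thermal_upper_tail_general N δ hN hδ k
end

section
/- Let N > 0, α ∈ ℂ, and let z be a real number with z < (N+1)/N. Then (1/(π·N))·∫_ℂ exp(−|γ|²/N)·exp(−|γ+α|²·(1−z)) dγ = (1/(N+1−N·z))·exp(−|α|²·(1−z)/(N+1−N·z)), where the integral is over ℂ identified with ℝ² carrying Lebesgue measure. -/
/-!
Completing the square, `a‖v‖² + b‖v + w‖² = (a + b)‖v + (b/(a + b))w‖² + (ab/(a + b))‖w‖²`,
turns the product of the two Gaussians into a constant times a single translated Gaussian.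
By translation invariance of Lebesgue measure its integral over `ℂ ≅ ℝ²` is `π/(a + b)`,
which needs only `a + b > 0`; here `a = 1/N`, `b = 1 - z` and `a + b = (N + 1 - Nz)/N`.
-/

open MeasureTheory Real

section InnerProductSpace

variable {V : Type*} [NormedAddCommGroup V] [InnerProductSpace ℝ V]

theorem mul_sq_norm_add_mul_sq_norm_add {a b : ℝ} (hab : a + b ≠ 0) (v w : V) :
    a * ‖v‖ ^ 2 + b * ‖v + w‖ ^ 2
      = (a + b) * ‖v + (b / (a + b)) • w‖ ^ 2 + a * b / (a + b) * ‖w‖ ^ 2 := by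
  simp only [norm_add_sq_real, norm_smul, inner_smul_right, mul_pow, Real.norm_eq_abs, sq_abs]
  field_simp
  ring

variable [FiniteDimensional ℝ V] [MeasurableSpace V] [BorelSpace V]

theorem integral_rexp_neg_mul_sq_norm_add {b : ℝ} (hb : 0 < b) (w : V) :
    ∫ v : V, rexp (-b * ‖v + w‖ ^ 2) = (π / b) ^ (Module.finrank ℝ V / 2 : ℝ) := by
  rw [integral_add_right_eq_self (fun v ↦ rexp (-b * ‖v‖ ^ 2)) w,
    GaussianFourier.integral_rexp_neg_mul_sq_norm hb]

theorem integral_rexp_neg_mul_sq_norm_mul_rexp_neg_mul_sq_norm_add {a b : ℝ} (hab : 0 < a + b)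
    (w : V) :
    ∫ v : V, rexp (-a * ‖v‖ ^ 2) * rexp (-b * ‖v + w‖ ^ 2)
      = (π / (a + b)) ^ (Module.finrank ℝ V / 2 : ℝ) * rexp (-(a * b / (a + b)) * ‖w‖ ^ 2) := by
  have hsq (v : V) : rexp (-a * ‖v‖ ^ 2) * rexp (-b * ‖v + w‖ ^ 2)
      = rexp (-(a * b / (a + b)) * ‖w‖ ^ 2) * rexp (-(a + b) * ‖v + (b / (a + b)) • w‖ ^ 2) := by
    rw [← Real.exp_add, ← Real.exp_add, neg_mul, neg_mul, neg_mul, neg_mul, ← neg_add, ← neg_add,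
      mul_sq_norm_add_mul_sq_norm_add hab.ne', add_comm]
  simp_rw [hsq]
  rw [integral_const_mul, integral_rexp_neg_mul_sq_norm_add hab, mul_comm]

end InnerProductSpace

/-- Closed form of the probability generating function of a displaced thermal state:
`(1/(πN))·∫_ℂ e^{−|γ|²/N} e^{−|γ+α|²(1−z)} dγ
  = (1/(N+1−Nz))·exp(−|α|²(1−z)/(N+1−Nz))` for `z < (N+1)/N`. -/
theorem displaced_thermal_pgf_integral (N : ℝ) (hN : 0 < N) (α : ℂ) (z : ℝ)
    (hz : z < (N + 1) / N) :
    (1 / (Real.pi * N)) *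
      ∫ γ : ℂ, Real.exp (-(‖γ‖) ^ 2 / N) *
        Real.exp (-(‖γ + α‖) ^ 2 * (1 - z))
    = (1 / (N + 1 - N * z)) *
        Real.exp (-(‖α‖) ^ 2 * (1 - z) / (N + 1 - N * z)) := by
  have hD : 0 < N + 1 - N * z := by
    have := (lt_div_iff₀ hN).mp hz
    linarith
  have hsum : N⁻¹ + (1 - z) = (N + 1 - N * z) / N := by field_simp; ring
  calc (1 / (π * N)) * ∫ γ : ℂ, rexp (-‖γ‖ ^ 2 / N) * rexp (-‖γ + α‖ ^ 2 * (1 - z))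
      = (1 / (π * N)) * ∫ γ : ℂ, rexp (-N⁻¹ * ‖γ‖ ^ 2) * rexp (-(1 - z) * ‖γ + α‖ ^ 2) := by
        simp only [neg_mul, mul_comm _ (1 - z), div_eq_inv_mul, mul_neg]
    _ = (1 / (π * N)) * ((π / (N⁻¹ + (1 - z))) *
          rexp (-(N⁻¹ * (1 - z) / (N⁻¹ + (1 - z))) * ‖α‖ ^ 2)) := by
        rw [integral_rexp_neg_mul_sq_norm_mul_rexp_neg_mul_sq_norm_add
          (hsum ▸ div_pos hD hN), Complex.finrank_real_complex]
        norm_num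
    _ = (1 / (N + 1 - N * z)) * rexp (-‖α‖ ^ 2 * (1 - z) / (N + 1 - N * z)) := by
        rw [hsum]
        field_simp
end

section
/- Let N > 0 and α ∈ ℂ, and define for n ∈ ℕ: p_N(n|α) := (1/(N+1))·(N/(N+1))^n·exp(−|α|²/(N+1))·L_n(−|α|²/(N·(N+1))), where L_n(x) := Σ_{j=0}^n binom(n,j)·(−x)^j/j! is the n-th Laguerre polynomial. Then for every real z with 0 ≤ z < (N+1)/N, the series Σ_{n=0}^∞ p_N(n|α)·z^n converges and equals (1/(N+1−N·z))·exp(−|α|²·(1−z)/(N+1−N·z)). -/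
/-- The `n`-th Laguerre polynomial `L_n(x) = Σ_{j=0}^n binom(n,j)·(−x)^j/j!`. -/
noncomputable def laguerre (n : ℕ) (x : ℝ) : ℝ :=
  ∑ j ∈ Finset.range (n + 1), (n.choose j : ℝ) * (-x) ^ j / (Nat.factorial j : ℝ)

/-- Photon-number distribution of a displaced thermal state with mean thermal photon
number `N` and displacement `α`. -/
noncomputable def pdisp (N : ℝ) (α : ℂ) (n : ℕ) : ℝ :=
  (1 / (N + 1)) * (N / (N + 1)) ^ n * Real.exp (-(‖α‖) ^ 2 / (N + 1)) *
    laguerre n (-(‖α‖) ^ 2 / (N * (N + 1)))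

/-!
Expanding `Lₙ(x) = Σⱼ C(n,j) (-x)ʲ / j!` turns `Σₙ tⁿ Lₙ(x)` into a double series indexed by
`n = j + m`. For fixed `j` the sum over `m` is the negative binomial series
`Σₘ C(m+j, j) tᵐ = (1 - t)^(-(j+1))`, and the remaining sum over `j` is an exponential series, so
`Σₙ tⁿ Lₙ(x) = exp(-x t / (1 - t)) / (1 - t)` for `|t| < 1`; absolute convergence of the double
series justifies the regrouping. The generating function of `p_N(·|α)` is this identity at
`t = N z / (N + 1)`, `x = -|α|² / (N (N + 1))`, scaled by `exp(-|α|² / (N + 1)) / (N + 1)`.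
-/

open Finset Nat Real

theorem HasSum.sum_antidiagonal {A α : Type*} [AddMonoid A] [HasAntidiagonal A]
    [AddCommMonoid α] [TopologicalSpace α] [ContinuousAdd α] [RegularSpace α]
    {f : A × A → α} {a : α} (h : HasSum f a) :
    HasSum (fun n ↦ ∑ p ∈ antidiagonal n, f p) a :=
  (HasAntidiagonal.sigmaAntidiagonalEquivProd.hasSum_iff.2 h).sigma fun n ↦
    sum_coe_sort (antidiagonal n) f ▸ hasSum_fintype _

-- `(j, m)` indexes the `j`-th summand of `tⁿ Lₙ(x)` for `n = j + m`.
noncomputable def laguerreGenTerm (x t : ℝ) (p : ℕ × ℕ) : ℝ :=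
  (-x * t) ^ p.1 / p.1 ! * ((p.2 + p.1).choose p.1 * t ^ p.2)

section
variable {t : ℝ}

theorem hasSum_laguerreGenTerm_fiber (x : ℝ) (ht : |t| < 1) (j : ℕ) :
    HasSum (fun m ↦ laguerreGenTerm x t (j, m)) ((-x * t / (1 - t)) ^ j / j ! / (1 - t)) := by
  have h1t : 1 - t ≠ 0 := by linarith [le_abs_self t]
  rw [show (-x * t / (1 - t)) ^ j / j ! / (1 - t) = (-x * t) ^ j / j ! * (1 / (1 - t) ^ (j + 1)) by
    rw [div_pow, pow_succ]; field_simp]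
  exact (hasSum_choose_mul_geometric_of_norm_lt_one j ht).mul_left ((-x * t) ^ j / j !)

theorem abs_laguerreGenTerm (x t : ℝ) (p : ℕ × ℕ) :
    |laguerreGenTerm x t p| = laguerreGenTerm (-|x|) |t| p := by
  simp [laguerreGenTerm, abs_mul, abs_div, abs_pow]

theorem summable_laguerreGenTerm (x : ℝ) (ht : |t| < 1) : Summable (laguerreGenTerm x t) := by
  refine .of_norm ?_
  simp_rw [Real.norm_eq_abs, abs_laguerreGenTerm]
  have hfiber := hasSum_laguerreGenTerm_fiber (-|x|) (t := |t|) (by rwa [abs_abs])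
  refine (summable_prod_of_nonneg fun p ↦ ?_).2 ⟨fun j ↦ (hfiber j).summable, ?_⟩
  · simp only [laguerreGenTerm, neg_neg]
    positivity
  simp_rw [fun j ↦ (hfiber j).tsum_eq]
  exact (Real.summable_pow_div_factorial _).div_const _

theorem hasSum_laguerreGenTerm (x : ℝ) (ht : |t| < 1) :
    HasSum (laguerreGenTerm x t) (exp (-x * t / (1 - t)) / (1 - t)) := by
  have hsum := (summable_laguerreGenTerm x ht).hasSum
  convert hsum using 1
  rw [Real.exp_eq_exp_ℝ]
  refine ((NormedSpace.expSeries_div_hasSum_exp _).div_const (1 - t)).unique ?_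
  exact hsum.prod_fiberwise (hasSum_laguerreGenTerm_fiber x ht)

theorem sum_antidiagonal_laguerreGenTerm (x t : ℝ) (n : ℕ) :
    ∑ p ∈ antidiagonal n, laguerreGenTerm x t p = t ^ n * laguerre n x := by
  rw [Nat.sum_antidiagonal_eq_sum_range_succ_mk, laguerre, mul_sum]
  refine sum_congr rfl fun j hj ↦ ?_
  have hjn : j ≤ n := Nat.lt_succ_iff.mp (mem_range.mp hj)
  rw [laguerreGenTerm, Nat.sub_add_cancel hjn, ← pow_sub_mul_pow t hjn]
  ring

theorem hasSum_pow_mul_laguerre (x : ℝ) (ht : |t| < 1) :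
    HasSum (fun n ↦ t ^ n * laguerre n x) (exp (-x * t / (1 - t)) / (1 - t)) := by
  simpa only [sum_antidiagonal_laguerreGenTerm] using (hasSum_laguerreGenTerm x ht).sum_antidiagonal

end

/-- Probability generating function of the displaced thermal photon-number
distribution: for `0 ≤ z < (N+1)/N`, `Σ_n p_N(n|α)·z^n` converges and equals
`(1/(N+1−Nz))·exp(−|α|²(1−z)/(N+1−Nz))`. -/
theorem displaced_thermal_pgf (N : ℝ) (hN : 0 < N) (α : ℂ) (z : ℝ)
    (hz0 : 0 ≤ z) (hz : z < (N + 1) / N) :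
    Summable (fun n : ℕ => pdisp N α n * z ^ n) ∧
    ∑' n : ℕ, pdisp N α n * z ^ n =
      (1 / (N + 1 - N * z)) *
        Real.exp (-(‖α‖) ^ 2 * (1 - z) / (N + 1 - N * z)) := by
  have hD : 0 < N + 1 - N * z := by
    rw [lt_div_iff₀ hN] at hz
    linarith
  set t := N / (N + 1) * z with ht_def
  set x := -‖α‖ ^ 2 / (N * (N + 1)) with hx_def
  have ht : |t| < 1 := by
    rw [abs_of_nonneg (by positivity), ht_def, div_mul_eq_mul_div, div_lt_one (by positivity)]
    linarith
  have hterm (n : ℕ) : exp (-‖α‖ ^ 2 / (N + 1)) / (N + 1) * (t ^ n * laguerre n x) =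
      pdisp N α n * z ^ n := by
    rw [pdisp, ht_def, mul_pow]
    ring
  have hvalue : exp (-‖α‖ ^ 2 / (N + 1)) / (N + 1) * (exp (-x * t / (1 - t)) / (1 - t)) =
      1 / (N + 1 - N * z) * exp (-‖α‖ ^ 2 * (1 - z) / (N + 1 - N * z)) := by
    have h1t : 1 - t = (N + 1 - N * z) / (N + 1) := by
      rw [ht_def]
      field_simp
    have hexponent : -‖α‖ ^ 2 / (N + 1) + -x * t / (1 - t) =
        -‖α‖ ^ 2 * (1 - z) / (N + 1 - N * z) := by
      rw [h1t, ht_def, hx_def]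
      field_simp
      ring
    rw [_root_.div_mul_div_comm, ← exp_add, hexponent, h1t]
    field_simp
  have hpgf := (hasSum_pow_mul_laguerre x ht).mul_left (exp (-‖α‖ ^ 2 / (N + 1)) / (N + 1))
  simp only [hterm, hvalue] at hpgf
  exact ⟨hpgf.summable, hpgf.tsum_eq⟩
end
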